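/- arXiv:2306.02016 — 4 statements merged into one kernel-verified Lean document; each statement's English description precedes it below -/
import Mathlib

section
/- There exists no real-rational n×n transfer matrix C ∈ RH∞ such that the positive feedback interconnection [P,C] is stable for every negative imaginary (NI) P ∈ R^{n×n} without double poles at the origin (i.e. every NI P whose pole at the origin, if any, is simple). -/
open Matrix Polynomial Filter Topology
open scoped ComplexOrder

noncomputable section

namespace NIControl

/-- Evaluate a real-rational function at a complex point (junk value at poles). -/
def evalC (f : RatFunc ℝ) (s : ℂ) : ℂ :=
  f.eval (algebraMap ℝ ℂ) s

/-- `s` is a pole of the real-rational function `f`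
(the reduced denominator vanishes at `s`). -/
def IsPoleAt (f : RatFunc ℝ) (s : ℂ) : Prop :=
  f.denom.eval₂ (algebraMap ℝ ℂ) s = 0

variable {n : ℕ}

/-- Pointwise evaluation of a real-rational transfer matrix at a complex point. -/
def evalM (G : Matrix (Fin n) (Fin n) (RatFunc ℝ)) (s : ℂ) : Matrix (Fin n) (Fin n) ℂ :=
  Matrix.of fun i j => evalC (G i j) s

/-- Pointwise evaluation of a real-rational transfer matrix at a real point. -/
def evalR (G : Matrix (Fin n) (Fin n) (RatFunc ℝ)) (x : ℝ) : Matrix (Fin n) (Fin n) ℝ :=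
  Matrix.of fun i j => (G i j).eval (RingHom.id ℝ) x

/-- Value at `s = ∞` of a proper real-rational function. -/
def atInfinity (f : RatFunc ℝ) : ℝ :=
  if f.num.degree = f.denom.degree then f.num.leadingCoeff / f.denom.leadingCoeff else 0

/-- The instantaneous gain `G(∞)` of a proper real-rational transfer matrix. -/
def evalInf (G : Matrix (Fin n) (Fin n) (RatFunc ℝ)) : Matrix (Fin n) (Fin n) ℝ :=
  Matrix.of fun i j => atInfinity (G i j)

/-- The matrix `G` has a pole at `s`. -/
def HasPole (G : Matrix (Fin n) (Fin n) (RatFunc ℝ)) (s : ℂ) : Prop :=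
  ∃ i j, IsPoleAt (G i j) s

/-- All entries of `G` are proper rational functions. -/
def Proper (G : Matrix (Fin n) (Fin n) (RatFunc ℝ)) : Prop :=
  ∀ i j, (G i j).num.degree ≤ (G i j).denom.degree

/-- All entries of `G` are strictly proper rational functions. -/
def StrictlyProper (G : Matrix (Fin n) (Fin n) (RatFunc ℝ)) : Prop :=
  ∀ i j, (G i j).num.degree < (G i j).denom.degree

/-- The pole of `G` at the origin (if any) is at most simple. -/
def NoDoubleOriginPole (G : Matrix (Fin n) (Fin n) (RatFunc ℝ)) : Prop :=
  ∀ i j, (G i j).denom.rootMultiplicity 0 ≤ 1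

/-- Membership in `RH∞`: proper and no poles in the closed right-half complex plane. -/
def MemRHinf {m : Type*} [Fintype m] (G : Matrix m m (RatFunc ℝ)) : Prop :=
  (∀ i j, (G i j).num.degree ≤ (G i j).denom.degree) ∧
  ∀ s : ℂ, 0 ≤ s.re → ∀ i j, ¬ IsPoleAt (G i j) s

/-- The point `jω` on the imaginary axis. -/
def jw (ω : ℝ) : ℂ := Complex.I * (ω : ℂ)

/-- The negative-imaginary frequency kernel `j (M − M*)`. -/
def niKer (M : Matrix (Fin n) (Fin n) ℂ) : Matrix (Fin n) (Fin n) ℂ :=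
  Complex.I • (M - Mᴴ)

/-- Negative imaginary (NI) real-rational transfer matrix. -/
def IsNI (G : Matrix (Fin n) (Fin n) (RatFunc ℝ)) : Prop :=
  Proper G ∧
  (∀ s : ℂ, 0 < s.re → ¬ HasPole G s) ∧
  (∀ ω : ℝ, 0 < ω → ¬ HasPole G (jw ω) → (niKer (evalM G (jw ω))).PosSemidef) ∧
  (∀ ω : ℝ, 0 < ω → HasPole G (jw ω) →
    ∃ R : Matrix (Fin n) (Fin n) ℂ, R.PosSemidef ∧
      Tendsto (fun s : ℂ => (s - jw ω) • Complex.I • evalM G s) (𝓝[≠] jw ω) (𝓝 R)) ∧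
  (HasPole G 0 →
    (∀ k : ℕ, 3 ≤ k → Tendsto (fun s : ℂ => s ^ k • evalM G s) (𝓝[≠] 0) (𝓝 0)) ∧
    ∃ R : Matrix (Fin n) (Fin n) ℂ, R.PosSemidef ∧
      Tendsto (fun s : ℂ => s ^ 2 • evalM G s) (𝓝[≠] 0) (𝓝 R))

/-- Strictly negative imaginary (SNI) real-rational transfer matrix. -/
def IsSNI (G : Matrix (Fin n) (Fin n) (RatFunc ℝ)) : Prop :=
  MemRHinf G ∧ ∀ ω : ℝ, 0 < ω → (niKer (evalM G (jw ω))).PosDef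

/-- Positive real (passive) real-rational transfer matrix. -/
def IsPositiveReal (G : Matrix (Fin n) (Fin n) (RatFunc ℝ)) : Prop :=
  MemRHinf G ∧ ∀ ω : ℝ, 0 ≤ ω → (evalM G (jw ω) + (evalM G (jw ω))ᴴ).PosSemidef

/-- Output strictly passive real-rational transfer matrix. -/
def IsOSP (G : Matrix (Fin n) (Fin n) (RatFunc ℝ)) : Prop :=
  MemRHinf G ∧ ∃ ε : ℝ, 0 < ε ∧ ∀ ω : ℝ, 0 ≤ ω →
    (evalM G (jw ω) + (evalM G (jw ω))ᴴ -
      (ε : ℂ) • ((evalM G (jw ω))ᴴ * evalM G (jw ω))).PosSemidef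

/-- Stability of the positive feedback interconnection `[P, C]`:
`[I; C] (I − P C)⁻¹ [I, P] ∈ RH∞`. -/
def FeedbackStable (P C : Matrix (Fin n) (Fin n) (RatFunc ℝ)) : Prop :=
  ((1 : Matrix (Fin n) (Fin n) (RatFunc ℝ)) - P * C).det ≠ 0 ∧
  MemRHinf (Matrix.fromBlocks
    (1 - P * C)⁻¹ ((1 - P * C)⁻¹ * P)
    (C * (1 - P * C)⁻¹) (C * (1 - P * C)⁻¹ * P))

/-- All eigenvalues of the complex matrix `M` are real and less than `c`. -/
def eigsRealAndLT (M : Matrix (Fin n) (Fin n) ℂ) (c : ℝ) : Prop :=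
  ∀ μ ∈ spectrum ℂ M, μ.im = 0 ∧ μ.re < c

/-- The (real) eigenvalues of the real matrix `M` are all real and its largest
eigenvalue is less than `c`. -/
def maxEigLT (M : Matrix (Fin n) (Fin n) ℝ) (c : ℝ) : Prop :=
  eigsRealAndLT (M.map (Complex.ofReal)) c

/-- Loewner order `A ≤ B` on real matrices. -/
def LoewnerLE (A B : Matrix (Fin n) (Fin n) ℝ) : Prop := (B - A).PosSemidef

/-- Strict Loewner order `A < B` on real matrices. -/
def LoewnerLT (A B : Matrix (Fin n) (Fin n) ℝ) : Prop := (B - A).PosDef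

end NIControl

/-!
Test the controller against the rank-one plants `P = f • Eᵢᵢ`, which are negative imaginary for
`f = 1/s` and for every real constant `f`. For such a plant the `(i, i)` entry of
`(I - P C)⁻¹ P` is `f / (1 - f c)` with `c = Cᵢᵢ`. If `c = 0`, the integrator `f = 1/s` leaves
this entry equal to `1/s`, with a pole at the origin. Otherwise `c(x₀) ≠ 0` at some real
`x₀ ≥ 0`, and the static gain `f = 1/c(x₀)` turns the entry into `1/(c(x₀) - c)`, which has a pole
at `x₀`.
-/

namespace RatFunc

universe u

section Eval

variable {K L : Type u} [Field K] [Field L] (f : K →+* L) (a : L)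

theorem denom_neg (x : RatFunc K) : (-x).denom = x.denom := by
  refine eq_of_monic_of_associated (monic_denom _) (monic_denom _) (associated_of_dvd_dvd ?_ ?_)
  · rw [denom_dvd x.denom_ne_zero]
    exact ⟨-x.num, by rw [map_neg, neg_div, num_div_denom]⟩
  · rw [denom_dvd (-x).denom_ne_zero]
    exact ⟨-(-x).num, by rw [map_neg, neg_div, num_div_denom, neg_neg]⟩

theorem num_neg (x : RatFunc K) : (-x).num = -x.num :=
  mul_right_cancel₀ x.denom_ne_zero (by rw [num_denom_neg, denom_neg])

theorem eval_neg (x : RatFunc K) : eval f a (-x) = -eval f a x := by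
  simp only [eval, num_neg, denom_neg, Polynomial.eval₂_neg, neg_div]

variable {f a} {x y : RatFunc K}

theorem eval₂_denom_sub_ne_zero (hx : x.denom.eval₂ f a ≠ 0) (hy : y.denom.eval₂ f a ≠ 0) :
    (x - y).denom.eval₂ f a ≠ 0 := by
  intro h
  have := Polynomial.eval₂_eq_zero_of_dvd_of_eval₂_eq_zero f a (denom_add_dvd x (-y))
    (by rwa [← sub_eq_add_neg])
  rw [Polynomial.eval₂_mul, denom_neg] at this
  exact mul_ne_zero hx hy this

theorem eval_sub (hx : x.denom.eval₂ f a ≠ 0) (hy : y.denom.eval₂ f a ≠ 0) :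
    eval f a (x - y) = eval f a x - eval f a y := by
  rw [sub_eq_add_neg, eval_add f a hx (by rwa [denom_neg]), eval_neg, sub_eq_add_neg]

theorem eval₂_denom_inv_eq_zero (hx : x ≠ 0) (hden : x.denom.eval₂ f a ≠ 0)
    (h : eval f a x = 0) : x⁻¹.denom.eval₂ f a = 0 := by
  have hnum : x.num.eval₂ f a = 0 := by
    rw [eval, div_eq_zero_iff] at h
    exact h.resolve_right hden
  exact Polynomial.eval₂_eq_zero_of_dvd_of_eval₂_eq_zero f a (associated_denom_inv hx).dvd' hnum

end Eval

variable {K : Type u} [Field K]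

theorem exists_eval_ne_zero {x : RatFunc K} (hx : x ≠ 0) {S : Set K} (hS : S.Infinite) :
    ∃ a ∈ S, eval (RingHom.id K) a x ≠ 0 := by
  by_contra! h
  refine mul_ne_zero (num_ne_zero hx) x.denom_ne_zero
    (Polynomial.eq_zero_of_infinite_isRoot _ (hS.mono fun a ha => ?_))
  have := h a ha
  rw [eval, div_eq_zero_iff] at this
  simpa [Polynomial.eval₂_id] using this

theorem isRoot_denom_inv_C_eval_sub {x : RatFunc K} {a : K} (hx : x.denom.eval a ≠ 0)
    (hne : x ≠ C (eval (RingHom.id K) a x)) :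
    (C (eval (RingHom.id K) a x) - x)⁻¹.denom.IsRoot a := by
  have hC : (C (eval (RingHom.id K) a x)).denom.eval₂ (RingHom.id K) a ≠ 0 := by simp
  refine eval₂_denom_inv_eq_zero (sub_ne_zero.2 hne.symm) (eval₂_denom_sub_ne_zero hC hx) ?_
  rw [eval_sub hC hx, eval_C, RingHom.id_apply, sub_self]

theorem num_X_inv : (X⁻¹ : RatFunc K).num = 1 := by
  rw [← algebraMap_X, ← one_div, ← map_one (algebraMap K[X] (RatFunc K)), num_div]
  simp

theorem denom_X_inv : (X⁻¹ : RatFunc K).denom = Polynomial.X := by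
  rw [← algebraMap_X, ← one_div, ← map_one (algebraMap K[X] (RatFunc K)),
    denom_div _ Polynomial.X_ne_zero]
  simp

end RatFunc

namespace Matrix

variable {ι K : Type*} [Fintype ι] [DecidableEq ι] [Field K] {C : Matrix ι ι K} {i : ι} {p : K}

theorem one_sub_single_mul_mul_single (C : Matrix ι ι K) (i : ι) (p : K) :
    (1 - single i i p * C) * single i i p = (1 - p * C i i) • single i i p := by
  ext a b
  by_cases hb : b = i
  · subst hb
    rcases eq_or_ne a b with rfl | ha
    · simp [sub_mul]
    · simp [ha, ha.symm]
  · simp [hb, Ne.symm hb]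

theorem one_sub_mul_ne_zero_of_isUnit_det (h : IsUnit (1 - single i i p * C).det) :
    1 - p * C i i ≠ 0 := by
  intro h0
  have hp : single i i p = 0 := by
    rw [← nonsing_inv_mul_cancel_left _ (single i i p) h, one_sub_single_mul_mul_single, h0,
      zero_smul, mul_zero]
  have : p = 0 := by simpa using congrFun (congrFun hp i) i
  simp [this] at h0

theorem inv_one_sub_single_mul_mul_single (h : IsUnit (1 - single i i p * C).det) :
    (1 - single i i p * C)⁻¹ * single i i p = (1 - p * C i i)⁻¹ • single i i p := by
  calc (1 - single i i p * C)⁻¹ * single i i p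
      = (1 - single i i p * C)⁻¹ * ((1 - p * C i i)⁻¹ • ((1 - p * C i i) • single i i p)) := by
        rw [smul_smul, inv_mul_cancel₀ (one_sub_mul_ne_zero_of_isUnit_det h), one_smul]
    _ = (1 - p * C i i)⁻¹ • single i i p := by
        rw [← one_sub_single_mul_mul_single, Matrix.mul_smul, nonsing_inv_mul_cancel_left _ _ h]

end Matrix

namespace NIControl

section SingleEntry

variable {n : ℕ} (i j : Fin n)

theorem not_isPoleAt_zero (s : ℂ) : ¬ IsPoleAt 0 s := by
  simp [IsPoleAt]

theorem isPoleAt_ofReal_iff {f : RatFunc ℝ} {x : ℝ} : IsPoleAt f x ↔ f.denom.IsRoot x := by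
  rw [IsPoleAt, ← Complex.coe_algebraMap, Polynomial.eval₂_at_apply, Complex.coe_algebraMap,
    Complex.ofReal_eq_zero, Polynomial.IsRoot.def]

theorem evalM_single (f : RatFunc ℝ) (s : ℂ) :
    evalM (single i j f) s = single i j (evalC f s) := by
  ext a b
  by_cases h : i = a ∧ j = b
  · simp [evalM, single_apply, h]
  · simp [evalM, single_apply, h, evalC]

theorem hasPole_single_iff {f : RatFunc ℝ} {s : ℂ} : HasPole (single i j f) s ↔ IsPoleAt f s := by
  refine ⟨fun ⟨a, b, h⟩ => ?_, fun h => ⟨i, j, by simpa using h⟩⟩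
  by_cases hab : i = a ∧ j = b
  · simpa [single_apply, hab] using h
  · exact absurd (by simpa [single_apply, hab] using h) (not_isPoleAt_zero s)

theorem proper_single {f : RatFunc ℝ} (hf : f.num.degree ≤ f.denom.degree) :
    Proper (single i j f) := by
  intro a b
  by_cases hab : i = a ∧ j = b
  · simpa [single_apply, hab] using hf
  · simp [hab]

theorem noDoubleOriginPole_single {f : RatFunc ℝ} (hf : f.denom.rootMultiplicity 0 ≤ 1) :
    NoDoubleOriginPole (single i j f) := by
  intro a b
  by_cases hab : i = a ∧ j = b
  · simpa [single_apply, hab] using hf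
  · simp [hab, Polynomial.rootMultiplicity_eq_zero]

theorem posSemidef_niKer_single {z : ℂ} (hz : z.im ≤ 0) : (niKer (single i i z)).PosSemidef := by
  have hker : niKer (single i i z) = diagonal (Pi.single i ((-2 * z.im : ℝ) : ℂ)) := by
    rw [diagonal_single]
    ext a b
    by_cases hab : i = a ∧ i = b
    · obtain ⟨rfl, rfl⟩ := hab
      apply Complex.ext <;> simp [niKer]; ring
    · simp [niKer, hab]
  rw [hker]
  exact PosSemidef.diagonal (Pi.single_nonneg.2 (Complex.zero_le_real.2 (by linarith)))

theorem isNI_single {f : RatFunc ℝ} (hproper : f.num.degree ≤ f.denom.degree)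
    (hpole : ∀ s, IsPoleAt f s → s = 0) (him : ∀ ω : ℝ, 0 < ω → (evalC f (jw ω)).im ≤ 0)
    (horigin : Tendsto (fun s => s ^ 2 * evalC f s) (𝓝[≠] 0) (𝓝 0)) :
    IsNI (single i i f) := by
  have hsq : Tendsto (fun s : ℂ => s ^ 2 • evalM (single i i f) s) (𝓝[≠] 0) (𝓝 0) := by
    simpa [evalM_single, smul_single] using horigin.smul_const (single i i (1 : ℂ))
  refine ⟨proper_single i i hproper, fun s hs hP => ?_, fun ω hω _ => ?_, fun ω hω hP => ?_,
    fun _ => ⟨fun k hk => ?_, 0, PosSemidef.zero, hsq⟩⟩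
  · rw [hpole s ((hasPole_single_iff i i).1 hP), Complex.zero_re] at hs
    exact hs.false
  · rw [evalM_single]
    exact posSemidef_niKer_single i (him ω hω)
  · have := hpole _ ((hasPole_single_iff i i).1 hP)
    simp [jw, hω.ne'] at this
  · have hpow : Tendsto (fun s : ℂ => s ^ (k - 2)) (𝓝[≠] 0) (𝓝 0) :=
      ((continuous_pow (k - 2)).tendsto' 0 0 (zero_pow (by omega))).mono_left nhdsWithin_le_nhds
    convert hpow.smul hsq using 1
    · ext s : 1
      rw [smul_smul, ← pow_add, Nat.sub_add_cancel (by omega)]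
    · simp

end SingleEntry

section Plants

variable {n : ℕ} (i : Fin n)

theorem isNI_single_C (k : ℝ) : IsNI (single i i (RatFunc.C k)) := by
  refine isNI_single i (by simpa using Polynomial.degree_C_le) (fun s hs => ?_) (fun ω _ => ?_) ?_
  · simp [IsPoleAt] at hs
  · simp [evalC]
  · simp only [evalC, RatFunc.eval_C]
    exact (((continuous_pow 2).mul continuous_const).tendsto' 0 0 (by simp)).mono_left
      nhdsWithin_le_nhds

theorem noDoubleOriginPole_single_C (k : ℝ) : NoDoubleOriginPole (single i i (RatFunc.C k)) :=
  noDoubleOriginPole_single i i (by simp [Polynomial.rootMultiplicity_eq_zero])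

theorem evalC_X_inv (s : ℂ) : evalC RatFunc.X⁻¹ s = s⁻¹ := by
  simp [evalC, RatFunc.eval, RatFunc.num_X_inv, RatFunc.denom_X_inv]

theorem isPoleAt_X_inv_iff {s : ℂ} : IsPoleAt RatFunc.X⁻¹ s ↔ s = 0 := by
  simp [IsPoleAt, RatFunc.denom_X_inv]

theorem isNI_single_X_inv : IsNI (single i i (RatFunc.X⁻¹ : RatFunc ℝ)) := by
  refine isNI_single i (by simp [RatFunc.num_X_inv, RatFunc.denom_X_inv])
    (fun s => isPoleAt_X_inv_iff.1) (fun ω hω => ?_) ?_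
  · simp [evalC_X_inv, jw, hω.le]
  · refine (tendsto_id.mono_left nhdsWithin_le_nhds).congr' ?_
    filter_upwards [self_mem_nhdsWithin] with s hs
    rw [evalC_X_inv, pow_two, mul_assoc, mul_inv_cancel₀ hs, mul_one, id]

theorem noDoubleOriginPole_single_X_inv :
    NoDoubleOriginPole (single i i (RatFunc.X⁻¹ : RatFunc ℝ)) :=
  noDoubleOriginPole_single i i <| by
    simpa [RatFunc.denom_X_inv] using (rootMultiplicity_X_sub_C_self (x := (0 : ℝ))).le

end Plants

section Feedback

variable {n : ℕ} {i : Fin n} {p : RatFunc ℝ} {C : Matrix (Fin n) (Fin n) (RatFunc ℝ)}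

theorem FeedbackStable.one_sub_mul_ne_zero (hPC : FeedbackStable (single i i p) C) :
    1 - p * C i i ≠ 0 :=
  one_sub_mul_ne_zero_of_isUnit_det (isUnit_iff_ne_zero.2 hPC.1)

theorem FeedbackStable.not_isPoleAt_single (hPC : FeedbackStable (single i i p) C) {s : ℂ}
    (hs : 0 ≤ s.re) : ¬ IsPoleAt ((1 - p * C i i)⁻¹ * p) s := by
  have h := hPC.2.2 s hs (Sum.inl i) (Sum.inr i)
  rwa [fromBlocks_apply₁₂, inv_one_sub_single_mul_mul_single (isUnit_iff_ne_zero.2 hPC.1),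
    Matrix.smul_apply, single_apply_same, smul_eq_mul] at h

theorem not_feedbackStable_single_X_inv (hc : C i i = 0) :
    ¬ FeedbackStable (single i i RatFunc.X⁻¹) C := fun hPC => by
  simpa [hc, isPoleAt_X_inv_iff] using hPC.not_isPoleAt_single (s := 0) le_rfl

theorem not_feedbackStable_single_C {x : ℝ} (hx : 0 ≤ x)
    (hc : (C i i).eval (RingHom.id ℝ) x ≠ 0) :
    ¬ FeedbackStable (single i i (RatFunc.C ((C i i).eval (RingHom.id ℝ) x)⁻¹)) C := fun hPC => by
  set r := (C i i).eval (RingHom.id ℝ) x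
  have hr : RatFunc.C r ≠ 0 := by simpa using hc
  have hne : C i i ≠ RatFunc.C r := fun h => hPC.one_sub_mul_ne_zero (by
    rw [h, map_inv₀, inv_mul_cancel₀ hr, sub_self])
  have hloop : (1 - RatFunc.C r⁻¹ * C i i)⁻¹ * RatFunc.C r⁻¹ = (RatFunc.C r - C i i)⁻¹ := by
    rw [map_inv₀]
    field_simp
  refine hPC.not_isPoleAt_single (s := x) (by simpa using hx) ?_
  rw [hloop, isPoleAt_ofReal_iff]
  exact RatFunc.isRoot_denom_inv_C_eval_sub (RatFunc.eval₂_denom_ne_zero hc) hne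

end Feedback

/-- no stable controller robustly stabilises all NI plants
without double poles at the origin. -/
theorem no_universal_stable_controller {n : ℕ} (hn : 0 < n) :
    ¬ ∃ C : Matrix (Fin n) (Fin n) (RatFunc ℝ), MemRHinf C ∧
      ∀ P : Matrix (Fin n) (Fin n) (RatFunc ℝ), IsNI P → NoDoubleOriginPole P → FeedbackStable P C := by
  rintro ⟨C, -, hstab⟩
  let i : Fin n := ⟨0, hn⟩
  by_cases hc : C i i = 0
  · exact not_feedbackStable_single_X_inv hc
      (hstab _ (isNI_single_X_inv i) (noDoubleOriginPole_single_X_inv i))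
  · obtain ⟨x, hx, hcx⟩ := RatFunc.exists_eval_ne_zero hc (Set.Ici_infinite 0)
    exact not_feedbackStable_single_C hx hcx
      (hstab _ (isNI_single_C i _) (noDoubleOriginPole_single_C i _))

end NIControl
end
end

section
/- Let N ∈ RH∞^{n×n} be real-rational and positive real, and let ω₀ > 0. Then the transfer matrix P(s) = (ω₀/s) N(s) is negative imaginary (NI) and satisfies P(∞) = 0. -/
/-!
On the imaginary axis `P(jω) = (ω₀ / jω) N(jω)`, so `j (P(jω) − P(jω)*) = (ω₀ / ω) (N(jω) + N(jω)*)`,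
which is positive semidefinite by passivity of `N`. Dividing by `s` lowers the relative degree by
one, so `P` is strictly proper and `P(∞) = 0`; and since `N` has no poles in the closed right
half-plane, the only possible pole of `P` there is at the origin, where `s² P(s) = ω₀ s N(s) → 0`.
-/

open Matrix Polynomial Filter Topology
open scoped ComplexOrder

noncomputable section

namespace NIControl

variable {n : ℕ}

section RatFuncLemmas

universe u

variable {K L : Type u} [Field K] [Field L]

lemma degree_num_lt_degree_denom_of_intDegree_neg {x : RatFunc K} (hx : x.intDegree < 0) :
    x.num.degree < x.denom.degree := by
  unfold RatFunc.intDegree at hx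
  exact Polynomial.degree_lt_degree (by omega)

lemma intDegree_nonpos_of_degree_num_le {x : RatFunc K} (hx : x.num.degree ≤ x.denom.degree) :
    x.intDegree ≤ 0 := by
  have := Polynomial.natDegree_le_natDegree hx
  unfold RatFunc.intDegree
  omega

lemma degree_num_lt_degree_denom_C_div_X_mul (c : K) {x : RatFunc K}
    (hx : x.num.degree ≤ x.denom.degree) :
    (RatFunc.C c / RatFunc.X * x).num.degree < (RatFunc.C c / RatFunc.X * x).denom.degree := by
  rcases eq_or_ne (RatFunc.C c / RatFunc.X * x) 0 with h | h
  · simp [h]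
  obtain ⟨hcX, hx0⟩ := mul_ne_zero_iff.mp h
  have hc : RatFunc.C c ≠ 0 := (div_ne_zero_iff.mp hcX).1
  apply degree_num_lt_degree_denom_of_intDegree_neg
  rw [RatFunc.intDegree_mul hcX hx0, RatFunc.intDegree_div hc RatFunc.X_ne_zero,
    RatFunc.intDegree_C, RatFunc.intDegree_X]
  linarith [intDegree_nonpos_of_degree_num_le hx]

lemma denom_C_div_X_dvd (c : K) : (RatFunc.C c / RatFunc.X).denom ∣ Polynomial.X := by
  rw [← RatFunc.algebraMap_C, ← RatFunc.algebraMap_X]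
  exact RatFunc.denom_div_dvd _ _

variable {f : K →+* L} {a : L}

lemma eval₂_denom_C_div_X_ne_zero (c : K) (ha : a ≠ 0) :
    (RatFunc.C c / RatFunc.X).denom.eval₂ f a ≠ 0 := fun h =>
  ha (by simpa using Polynomial.eval₂_eq_zero_of_dvd_of_eval₂_eq_zero f a (denom_C_div_X_dvd c) h)

lemma eval₂_denom_C_div_X_mul_ne_zero (c : K) {x : RatFunc K} (ha : a ≠ 0)
    (hx : x.denom.eval₂ f a ≠ 0) : (RatFunc.C c / RatFunc.X * x).denom.eval₂ f a ≠ 0 := by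
  intro h
  have := Polynomial.eval₂_eq_zero_of_dvd_of_eval₂_eq_zero f a (RatFunc.denom_mul_dvd _ x) h
  rw [Polynomial.eval₂_mul] at this
  exact mul_ne_zero (eval₂_denom_C_div_X_ne_zero c ha) hx this

lemma eval_C_div_X (c : K) (ha : a ≠ 0) :
    RatFunc.eval f a (RatFunc.C c / RatFunc.X) = f c / a := by
  have h := RatFunc.eval_mul f a (eval₂_denom_C_div_X_ne_zero c ha) (y := RatFunc.X) (by simp)
  rw [div_mul_cancel₀ _ RatFunc.X_ne_zero, RatFunc.eval_C, RatFunc.eval_X] at h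
  rw [eq_div_iff ha, h]

lemma eval_C_div_X_mul (c : K) {x : RatFunc K} (ha : a ≠ 0) (hx : x.denom.eval₂ f a ≠ 0) :
    RatFunc.eval f a (RatFunc.C c / RatFunc.X * x) = f c / a * RatFunc.eval f a x := by
  rw [RatFunc.eval_mul f a (eval₂_denom_C_div_X_ne_zero c ha) hx, eval_C_div_X c ha]

end RatFuncLemmas

lemma jw_ne_zero {ω : ℝ} (hω : ω ≠ 0) : jw ω ≠ 0 :=
  mul_ne_zero Complex.I_ne_zero (Complex.ofReal_ne_zero.mpr hω)

lemma re_jw (ω : ℝ) : (jw ω).re = 0 := by simp [jw]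

lemma niKer_div_jw_smul (c : ℝ) {ω : ℝ} (hω : ω ≠ 0) (M : Matrix (Fin n) (Fin n) ℂ) :
    niKer (((c : ℂ) / jw ω) • M) = (c / ω) • (M + Mᴴ) := by
  ext i j
  simp only [niKer, jw, Matrix.smul_apply, Matrix.sub_apply, Matrix.add_apply,
    Matrix.conjTranspose_apply, Matrix.conjTranspose_smul, smul_eq_mul, Complex.real_smul,
    Complex.star_def, map_div₀, map_mul, Complex.conj_ofReal, Complex.conj_I, Complex.ofReal_div]
  field_simp
  ring

lemma MemRHinf.not_hasPole {G : Matrix (Fin n) (Fin n) (RatFunc ℝ)} (hG : MemRHinf G) {s : ℂ}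
    (hs : 0 ≤ s.re) : ¬ HasPole G s := fun ⟨i, j, h⟩ => hG.2 s hs i j h

lemma StrictlyProper.proper {G : Matrix (Fin n) (Fin n) (RatFunc ℝ)} (hG : StrictlyProper G) :
    Proper G := fun i j => (hG i j).le

lemma StrictlyProper.evalInf_eq_zero {G : Matrix (Fin n) (Fin n) (RatFunc ℝ)}
    (hG : StrictlyProper G) : evalInf G = 0 := by
  ext i j
  exact if_neg (hG i j).ne

lemma continuousAt_evalM {G : Matrix (Fin n) (Fin n) (RatFunc ℝ)} {s : ℂ} (hs : ¬ HasPole G s) :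
    ContinuousAt (evalM G) s := by
  refine continuousAt_pi.2 fun i => continuousAt_pi.2 fun j => ?_
  exact ((G i j).num.continuous_eval₂ _).continuousAt.div
    ((G i j).denom.continuous_eval₂ _).continuousAt fun h => hs ⟨i, j, h⟩

lemma eventually_not_hasPole {G : Matrix (Fin n) (Fin n) (RatFunc ℝ)} {s : ℂ}
    (hs : ¬ HasPole G s) : ∀ᶠ z in 𝓝 s, ¬ HasPole G z := by
  simp only [HasPole, not_exists, eventually_all]
  exact fun i j => ((G i j).denom.continuous_eval₂ _).continuousAt.eventually_ne
    fun h => hs ⟨i, j, h⟩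

section IntegratorSeries

def integratorSeries (c : ℝ) (G : Matrix (Fin n) (Fin n) (RatFunc ℝ)) :
    Matrix (Fin n) (Fin n) (RatFunc ℝ) :=
  Matrix.of fun i j => RatFunc.C c / RatFunc.X * G i j

variable {G : Matrix (Fin n) (Fin n) (RatFunc ℝ)}

lemma strictlyProper_integratorSeries (c : ℝ) (hG : Proper G) :
    StrictlyProper (integratorSeries c G) :=
  fun i j => degree_num_lt_degree_denom_C_div_X_mul c (hG i j)

lemma not_hasPole_integratorSeries (c : ℝ) {s : ℂ} (hs : s ≠ 0) (hG : ¬ HasPole G s) :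
    ¬ HasPole (integratorSeries c G) s := fun ⟨i, j, h⟩ =>
  eval₂_denom_C_div_X_mul_ne_zero c hs (fun h' => hG ⟨i, j, h'⟩) h

lemma evalM_integratorSeries (c : ℝ) {s : ℂ} (hs : s ≠ 0) (hG : ¬ HasPole G s) :
    evalM (integratorSeries c G) s = ((c : ℂ) / s) • evalM G s := by
  ext i j
  exact eval_C_div_X_mul c hs fun h => hG ⟨i, j, h⟩

lemma tendsto_pow_smul_evalM_integratorSeries (c : ℝ) (hG : ¬ HasPole G 0) {k : ℕ}
    (hk : 2 ≤ k) :
    Tendsto (fun s : ℂ => s ^ k • evalM (integratorSeries c G) s) (𝓝[≠] 0) (𝓝 0) := by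
  have hev : (fun s : ℂ => (c * s ^ (k - 1)) • evalM G s)
      =ᶠ[𝓝[≠] 0] fun s => s ^ k • evalM (integratorSeries c G) s := by
    filter_upwards [nhdsWithin_le_nhds (eventually_not_hasPole hG), self_mem_nhdsWithin]
      with s hsG (hs : s ≠ 0)
    rw [evalM_integratorSeries c hs hsG, smul_smul, ← pow_sub_one_mul (by omega : k ≠ 0) s]
    field_simp
  have hlim : Tendsto (fun s : ℂ => (c * s ^ (k - 1)) • evalM G s) (𝓝 0)
      (𝓝 (((c : ℂ) * 0 ^ (k - 1)) • evalM G 0)) :=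
    ((continuous_const.mul (continuous_pow (k - 1))).tendsto 0).smul (continuousAt_evalM hG)
  rw [zero_pow (by omega), mul_zero, zero_smul] at hlim
  exact (hlim.mono_left nhdsWithin_le_nhds).congr' hev

end IntegratorSeries

/-- `(ω₀ / s) N(s)` is NI with zero instantaneous gain whenever
`N` is positive real. -/
theorem positive_real_over_s_is_NI {n : ℕ} (N : Matrix (Fin n) (Fin n) (RatFunc ℝ))
    (hN : IsPositiveReal N) (ω₀ : ℝ) (hω₀ : 0 < ω₀) :
    let P : Matrix (Fin n) (Fin n) (RatFunc ℝ) :=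
      Matrix.of fun i j => (RatFunc.C ω₀ / RatFunc.X) * N i j
    IsNI P ∧ evalInf P = 0 := by
  show IsNI (integratorSeries ω₀ N) ∧ evalInf (integratorSeries ω₀ N) = 0
  obtain ⟨hRH, hpass⟩ := hN
  have hstrict := strictlyProper_integratorSeries ω₀ hRH.1
  have hpole {s : ℂ} (hs0 : s ≠ 0) (hs : 0 ≤ s.re) : ¬ HasPole (integratorSeries ω₀ N) s :=
    not_hasPole_integratorSeries ω₀ hs0 (hRH.not_hasPole hs)
  have hN0 : ¬ HasPole N 0 := hRH.not_hasPole le_rfl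
  refine ⟨⟨hstrict.proper, fun s hs => hpole (by rintro rfl; simp at hs) hs.le, ?_,
    fun ω hω h => absurd h (hpole (jw_ne_zero hω.ne') (re_jw ω).ge), fun _ => ?_⟩,
    hstrict.evalInf_eq_zero⟩
  · intro ω hω _
    rw [evalM_integratorSeries ω₀ (jw_ne_zero hω.ne') (hRH.not_hasPole (re_jw ω).ge),
      niKer_div_jw_smul ω₀ hω.ne']
    exact (hpass ω hω.le).smul (div_nonneg hω₀.le hω.le)
  · exact ⟨fun k hk => tendsto_pow_smul_evalM_integratorSeries ω₀ hN0 (by omega),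
      0, .zero, tendsto_pow_smul_evalM_integratorSeries ω₀ hN0 le_rfl⟩

end NIControl
end
end

section
/- Let ω₀ > 0 and let α, β ∈ ℝⁿ. Define the polynomial vector p(s) = αs + β and the n×n real-rational transfer matrix G(s) = p(s) p(−s)^T / (s² + ω₀²). Then G is negative imaginary (NI); in particular j(G(jω) − G(jω)*) = 0 for all ω ∈ (0,∞) with ω ≠ ω₀, and lim_{s→jω₀} (s − jω₀) j G(s) = (1/(2ω₀)) p(jω₀) p(jω₀)* ≥ 0. -/
/-!
Because `p` has real coefficients, `p(-jω) = conj p(jω)`, so off resonance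
`G(jω) = p(jω) p(jω)* / (ω₀² - ω²)` is Hermitian and the NI kernel `j(G - G*)` vanishes.
The only possible poles are the roots `±jω₀` of `s² + ω₀²`; near `jω₀`,
`(s - jω₀) G(s) = p(s) p(-s)ᵀ / (s + jω₀)` is continuous, and its value at `jω₀` multiplied by `j`
is `p(jω₀) p(jω₀)* / (2ω₀) ≥ 0`.
-/

open Matrix Polynomial Filter Topology
open scoped ComplexOrder

noncomputable section

namespace NIControl

variable {n : ℕ}

lemma degree_num_le_degree_denom_of_natDegree_le {K : Type*} [Field K] {N D : K[X]} (hD : D ≠ 0)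
    (h : N.natDegree ≤ D.natDegree) :
    (algebraMap K[X] (RatFunc K) N / algebraMap K[X] (RatFunc K) D).num.degree ≤
      (algebraMap K[X] (RatFunc K) N / algebraMap K[X] (RatFunc K) D).denom.degree := by
  set f := algebraMap K[X] (RatFunc K) N / algebraMap K[X] (RatFunc K) D
  obtain hnum | hnum := eq_or_ne f.num 0
  · simp [hnum]
  have hN : N ≠ 0 := by rintro rfl; simp [f] at hnum
  have hcross : f.num * D = N * f.denom := (RatFunc.num_mul_eq_mul_denom_iff hD).mpr rfl
  have hdeg := congrArg natDegree hcross
  rw [natDegree_mul hnum hD, natDegree_mul hN f.denom_ne_zero] at hdeg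
  rw [degree_eq_natDegree hnum, degree_eq_natDegree f.denom_ne_zero]
  exact_mod_cast (by omega : f.num.natDegree ≤ f.denom.natDegree)

lemma evalC_eq (f : RatFunc ℝ) (s : ℂ) : evalC f s = aeval s f.num / aeval s f.denom := rfl

lemma IsPoleAt.aeval_eq_zero {N D : ℝ[X]} {s : ℂ}
    (h : IsPoleAt (algebraMap ℝ[X] (RatFunc ℝ) N / algebraMap ℝ[X] (RatFunc ℝ) D) s) :
    aeval s D = 0 :=
  eval₂_eq_zero_of_dvd_of_eval₂_eq_zero _ _ (RatFunc.denom_div_dvd N D) h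

lemma evalC_div {N D : ℝ[X]} {s : ℂ} (hD : aeval s D ≠ 0) :
    evalC (algebraMap ℝ[X] (RatFunc ℝ) N / algebraMap ℝ[X] (RatFunc ℝ) D) s =
      aeval s N / aeval s D := by
  set f := algebraMap ℝ[X] (RatFunc ℝ) N / algebraMap ℝ[X] (RatFunc ℝ) D
  have hdenom : aeval s f.denom ≠ 0 := mt IsPoleAt.aeval_eq_zero hD
  have hcross : f.num * D = N * f.denom :=
    (RatFunc.num_mul_eq_mul_denom_iff (fun h => hD (by simp [h]))).mpr rfl
  have hcross_s := congrArg (aeval s) hcross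
  rw [map_mul, map_mul] at hcross_s
  rw [evalC_eq, div_eq_div_iff hdenom hD]
  exact hcross_s

lemma continuousAt_evalC {f : RatFunc ℝ} {s : ℂ} (h : ¬ IsPoleAt f s) :
    ContinuousAt (evalC f) s :=
  (Polynomial.continuous_aeval f.num).continuousAt.div
    (Polynomial.continuous_aeval f.denom).continuousAt h

lemma niKer_eq_zero_of_isHermitian {M : Matrix (Fin n) (Fin n) ℂ} (hM : M.IsHermitian) :
    niKer M = 0 := by
  rw [niKer, hM.eq, sub_self, smul_zero]

lemma neg_jw (ω : ℝ) : -jw ω = star (jw ω) := by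
  simp [jw]

lemma jw_sq_add_sq (ω₀ ω : ℝ) : jw ω ^ 2 + (ω₀ : ℂ) ^ 2 = ((ω₀ ^ 2 - ω ^ 2 : ℝ) : ℂ) := by
  rw [jw]
  push_cast
  linear_combination (ω : ℂ) ^ 2 * Complex.I_sq

lemma jw_sq_add_sq_ne_zero {ω₀ ω : ℝ} (h₁ : ω ≠ ω₀) (h₂ : ω ≠ -ω₀) :
    jw ω ^ 2 + (ω₀ : ℂ) ^ 2 ≠ 0 := by
  rw [jw_sq_add_sq, Complex.ofReal_ne_zero, sub_ne_zero, ne_comm]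
  exact fun h => (sq_eq_sq_iff_eq_or_eq_neg.mp h).elim h₁ h₂

lemma re_eq_zero_of_sq_add_sq_eq_zero {s : ℂ} {a : ℝ} (h : s ^ 2 + (a : ℂ) ^ 2 = 0) :
    s.re = 0 := by
  have hre := congrArg Complex.re h
  have him := congrArg Complex.im h
  simp only [sq, Complex.add_re, Complex.mul_re, Complex.ofReal_re, Complex.ofReal_im,
    Complex.add_im, Complex.mul_im, Complex.zero_re, Complex.zero_im] at hre him
  rcases mul_eq_zero.mp (by linarith : s.re * s.im = 0) with hr | hi
  · exact hr
  · rw [hi] at hre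
    nlinarith [sq_nonneg s.re, sq_nonneg a]

def dyadicResonant (ω₀ : ℝ) (p : Fin n → ℝ[X]) : Matrix (Fin n) (Fin n) (RatFunc ℝ) :=
  Matrix.of fun i j =>
    algebraMap ℝ[X] (RatFunc ℝ) (p i * (p j).comp (-X)) /
      algebraMap ℝ[X] (RatFunc ℝ) (X ^ 2 + C (ω₀ ^ 2))

section DyadicResonant

variable (ω₀ : ℝ) (p : Fin n → ℝ[X])

lemma proper_dyadicResonant (hp : ∀ i, (p i).natDegree ≤ 1) : Proper (dyadicResonant ω₀ p) := by
  intro i j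
  refine degree_num_le_degree_denom_of_natDegree_le (monic_X_pow_add_C _ two_ne_zero).ne_zero ?_
  rw [natDegree_X_pow_add_C]
  have hcomp : ((p j).comp (-X)).natDegree ≤ 1 := by
    rw [natDegree_comp, natDegree_neg, natDegree_X, mul_one]
    exact hp j
  exact natDegree_mul_le.trans (by linarith [hp i])

lemma sq_add_sq_eq_zero_of_hasPole {s : ℂ} (h : HasPole (dyadicResonant ω₀ p) s) :
    s ^ 2 + (ω₀ : ℂ) ^ 2 = 0 := by
  obtain ⟨i, j, hij⟩ := h
  simpa using hij.aeval_eq_zero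

lemma evalM_dyadicResonant {s : ℂ} (hs : s ^ 2 + (ω₀ : ℂ) ^ 2 ≠ 0) :
    evalM (dyadicResonant ω₀ p) s =
      (s ^ 2 + (ω₀ : ℂ) ^ 2)⁻¹ •
        vecMulVec (fun i => aeval s (p i)) (fun j => aeval (-s) (p j)) := by
  have hD : aeval s (X ^ 2 + C (ω₀ ^ 2) : ℝ[X]) = s ^ 2 + (ω₀ : ℂ) ^ 2 := by simp
  ext i j
  rw [evalM, dyadicResonant, of_apply, of_apply, evalC_div (hD ▸ hs), hD, Matrix.smul_apply,
    vecMulVec_apply, map_mul, aeval_comp, smul_eq_mul, div_eq_inv_mul]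
  simp

lemma aeval_neg_jw_eq_star (ω : ℝ) :
    (fun j => aeval (-jw ω) (p j)) = star fun j => aeval (jw ω) (p j) := by
  funext j
  rw [neg_jw]
  exact aeval_conj (p j) (jw ω)

lemma isHermitian_evalM_dyadicResonant_jw {ω : ℝ} (hω : jw ω ^ 2 + (ω₀ : ℂ) ^ 2 ≠ 0) :
    (evalM (dyadicResonant ω₀ p) (jw ω)).IsHermitian := by
  rw [evalM_dyadicResonant ω₀ p hω, aeval_neg_jw_eq_star, jw_sq_add_sq, ← Complex.ofReal_inv]
  exact (posSemidef_vecMulVec_self_star _).isHermitian.smul (by simp [IsSelfAdjoint])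

lemma isHermitian_evalM_dyadicResonant_jw_of_not_hasPole {ω : ℝ}
    (hω : ¬ HasPole (dyadicResonant ω₀ p) (jw ω)) :
    (evalM (dyadicResonant ω₀ p) (jw ω)).IsHermitian := by
  set F := fun ω' : ℝ => evalM (dyadicResonant ω₀ p) (jw ω')
  have hF : ContinuousAt F ω := by
    refine continuousAt_pi.2 fun i => continuousAt_pi.2 fun j => ?_
    have hij : ¬ IsPoleAt (dyadicResonant ω₀ p i j) (jw ω) := fun h => hω ⟨i, j, h⟩
    exact (continuousAt_evalC hij).comp (by unfold jw; fun_prop)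
  -- At a removable singularity `ω = ±ω₀`, Hermitian symmetry passes from nearby `ω'` by continuity.
  have hoff : ∀ᶠ ω' in 𝓝[≠] ω, star (F ω') = F ω' := by
    have hfin : ({ω₀, -ω₀} : Set ℝ).Finite := by simp
    filter_upwards [nhdsNE_le_cofinite ω hfin.eventually_cofinite_notMem] with ω' hω'
    simp only [Set.mem_insert_iff, Set.mem_singleton_iff, not_or] at hω'
    exact isHermitian_evalM_dyadicResonant_jw ω₀ p (jw_sq_add_sq_ne_zero hω'.1 hω'.2)
  exact tendsto_nhds_unique ((hF.star.tendsto).mono_left nhdsWithin_le_nhds)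
    ((hF.tendsto.mono_left nhdsWithin_le_nhds).congr' (hoff.mono fun _ h => h.symm))

lemma tendsto_residue_dyadicResonant (hω₀ : ω₀ ≠ 0) :
    Tendsto (fun s : ℂ => (s - jw ω₀) • Complex.I • evalM (dyadicResonant ω₀ p) s)
      (𝓝[≠] jw ω₀)
      (𝓝 ((2 * (ω₀ : ℂ))⁻¹ • vecMulVec (fun i => aeval (jw ω₀) (p i))
        (star fun i => aeval (jw ω₀) (p i)))) := by
  have hjw : jw ω₀ ≠ -jw ω₀ := by simp [jw, hω₀, CharZero.eq_neg_self_iff]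
  set H := fun s : ℂ => (Complex.I / (s + jw ω₀)) •
    vecMulVec (fun i => aeval s (p i)) (fun j => aeval (-s) (p j)) with hH_def
  have hcancel : H =ᶠ[𝓝[≠] jw ω₀]
      fun s => (s - jw ω₀) • Complex.I • evalM (dyadicResonant ω₀ p) s := by
    filter_upwards [self_mem_nhdsWithin,
      nhdsWithin_le_nhds (eventually_ne_nhds hjw)] with s hs₁ hs₂
    have hfac : s ^ 2 + (ω₀ : ℂ) ^ 2 = (s - jw ω₀) * (s + jw ω₀) := by
      rw [jw]; linear_combination (ω₀ : ℂ) ^ 2 * Complex.I_sq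
    have hsub : s - jw ω₀ ≠ 0 := sub_ne_zero.mpr hs₁
    have hadd : s + jw ω₀ ≠ 0 := by rwa [← sub_neg_eq_add, sub_ne_zero]
    rw [hH_def, evalM_dyadicResonant ω₀ p (hfac ▸ mul_ne_zero hsub hadd), smul_smul, smul_smul,
      hfac]
    field_simp
  have hH : ContinuousAt H (jw ω₀) := by
    have hv : Continuous fun s : ℂ => fun i => aeval s (p i) :=
      continuous_pi fun i => Polynomial.continuous_aeval (p i)
    refine (continuousAt_const.div (continuousAt_id.add continuousAt_const) ?_).smul
      (hv.matrix_vecMulVec (hv.comp continuous_neg)).continuousAt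
    show jw ω₀ + jw ω₀ ≠ 0
    rwa [← sub_neg_eq_add, sub_ne_zero]
  have hval : H (jw ω₀) = (2 * (ω₀ : ℂ))⁻¹ • vecMulVec (fun i => aeval (jw ω₀) (p i))
        (star fun i => aeval (jw ω₀) (p i)) := by
    rw [hH_def]
    beta_reduce
    rw [aeval_neg_jw_eq_star]
    congr 1
    rw [jw]
    field_simp
    norm_num
  exact hval ▸ (hH.tendsto.mono_left nhdsWithin_le_nhds).congr' hcancel

end DyadicResonant

/-- the dyadic transfer matrix `p(s) p(−s)ᵀ / (s² + ω₀²)` is NI,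
with vanishing NI kernel away from `ω₀` and PSD residue at `jω₀`. -/
theorem dyadic_resonant_transfer_matrix_is_NI {n : ℕ} (ω₀ : ℝ) (hω₀ : 0 < ω₀)
    (α β : Fin n → ℝ) :
    let p : Fin n → Polynomial ℝ :=
      fun i => Polynomial.C (α i) * Polynomial.X + Polynomial.C (β i)
    let G : Matrix (Fin n) (Fin n) (RatFunc ℝ) :=
      Matrix.of fun i j =>
        algebraMap (Polynomial ℝ) (RatFunc ℝ) (p i * (p j).comp (-Polynomial.X)) /
          algebraMap (Polynomial ℝ) (RatFunc ℝ) (Polynomial.X ^ 2 + Polynomial.C (ω₀ ^ 2))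
    let pc : Fin n → ℂ := fun i => (α i : ℂ) * jw ω₀ + (β i : ℂ)
    IsNI G ∧
    (∀ ω : ℝ, 0 < ω → ω ≠ ω₀ → niKer (evalM G (jw ω)) = 0) ∧
    Filter.Tendsto (fun s : ℂ => (s - jw ω₀) • Complex.I • evalM G s) (𝓝[≠] jw ω₀)
      (𝓝 ((2 * (ω₀ : ℂ))⁻¹ • Matrix.vecMulVec pc (star pc))) ∧
    ((2 * (ω₀ : ℂ))⁻¹ • Matrix.vecMulVec pc (star pc)).PosSemidef := by
  intro p G pc
  have hpc : pc = fun i => aeval (jw ω₀) (p i) := by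
    funext i
    simp [p, pc]
  rw [show G = dyadicResonant ω₀ p from rfl, hpc]
  set v := fun i => aeval (jw ω₀) (p i)
  have hres := tendsto_residue_dyadicResonant ω₀ p hω₀.ne'
  have hpsd : ((2 * (ω₀ : ℂ))⁻¹ • vecMulVec v (star v)).PosSemidef := by
    refine (posSemidef_vecMulVec_self_star v).smul ?_
    exact_mod_cast (inv_pos.mpr (mul_pos two_pos hω₀)).le
  have hpole : ∀ ω, 0 < ω → HasPole (dyadicResonant ω₀ p) (jw ω) → ω = ω₀ := fun ω hω h => by
    by_contra hne
    exact jw_sq_add_sq_ne_zero hne (by linarith) (sq_add_sq_eq_zero_of_hasPole ω₀ p h)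
  refine ⟨⟨proper_dyadicResonant ω₀ p fun i => natDegree_linear_le, fun s hs h => ?_,
    fun ω _ h => ?_, fun ω hω h => ?_, fun h => ?_⟩, fun ω hω hne => ?_, hres, hpsd⟩
  · exact hs.ne' (re_eq_zero_of_sq_add_sq_eq_zero (sq_add_sq_eq_zero_of_hasPole ω₀ p h))
  · rw [niKer_eq_zero_of_isHermitian
      (isHermitian_evalM_dyadicResonant_jw_of_not_hasPole ω₀ p h)]
    exact .zero
  · rw [hpole ω hω h]
    exact ⟨_, hpsd, hres⟩
  · have h0 := sq_add_sq_eq_zero_of_hasPole ω₀ p h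
    simp [hω₀.ne'] at h0
  · exact niKer_eq_zero_of_isHermitian
      (isHermitian_evalM_dyadicResonant_jw ω₀ p (jw_sq_add_sq_ne_zero hne (by linarith)))

end NIControl
end
end

section
/- Let A, B, D ∈ ℝ^{n×n} with A = A^T ≥ 0 (symmetric positive semidefinite), B = B^T, D = D^T, and D ≤ B (i.e. B − D positive semidefinite). If the largest eigenvalue of AB is less than 1, then the largest eigenvalue of AD is less than 1. -/
/-!
Write `s = √A`. Off zero, the spectrum of `A B` is that of the symmetric matrix `s B s`, and
likewise for `D`, so the claim reduces to selfadjoint elements: the real spectrum of `s B s` lies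
below `1`, hence, being compact, below some `r < 1`, i.e. `s B s ≤ r`. Then
`s D s ≤ s B s ≤ r`, so the spectrum of `s D s` lies below `r` as well. The argument runs in any
unital C⋆-algebra; real matrices enter it as complex matrices with the L² operator norm.
-/

open Matrix Polynomial Filter Topology
open scoped ComplexOrder

noncomputable section

section CStarAlgebra

variable {A : Type*} [CStarAlgebra A] [PartialOrder A] [StarOrderedRing A]

lemma spectrum_lt_of_le_of_spectrum_lt {x y : A} (hx : IsSelfAdjoint x) (hyx : y ≤ x) {c : ℝ}
    (h : ∀ t ∈ spectrum ℝ x, t < c) : ∀ t ∈ spectrum ℝ y, t < c := by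
  obtain ⟨r, hrc, hxr⟩ : ∃ r < c, ∀ t ∈ spectrum ℝ x, t ≤ r := by
    rcases (spectrum ℝ x).eq_empty_or_nonempty with hempty | hne
    · exact ⟨c - 1, by linarith, by simp [hempty]⟩
    · obtain ⟨r, hr, hmax⟩ := (spectrum.isCompact x).exists_isGreatest hne
      exact ⟨r, h r hr, hmax⟩
  have hyr : y ≤ algebraMap ℝ A r := hyx.trans ((le_algebraMap_iff_spectrum_le hx).mpr hxr)
  intro t ht
  exact ((le_algebraMap_iff_spectrum_le (hx.of_le hyx)).mp hyr t ht).trans_lt hrc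

lemma spectrum_mul_diff_zero_eq_sqrt_conj {a : A} (ha : 0 ≤ a) (b : A) :
    spectrum ℂ (a * b) \ {0} = spectrum ℂ (CFC.sqrt a * b * CFC.sqrt a) \ {0} := by
  conv_lhs => rw [← CFC.sqrt_mul_sqrt_self a ha, mul_assoc]
  exact spectrum.nonzero_mul_comm _ _

theorem spectrum_mul_lt_of_le {a b d : A} (ha : 0 ≤ a) (hb : IsSelfAdjoint b) (hdb : d ≤ b)
    {c : ℝ} (hc : 0 < c) (hab : ∀ z ∈ spectrum ℂ (a * b), z.im = 0 ∧ z.re < c) :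
    ∀ z ∈ spectrum ℂ (a * d), z.im = 0 ∧ z.re < c := by
  set s := CFC.sqrt a
  have hs : IsSelfAdjoint s := (CFC.sqrt_nonneg a).isSelfAdjoint
  have hsbs : IsSelfAdjoint (s * b * s) := hb.conjugate_self hs
  have hsds : s * d * s ≤ s * b * s := hs.conjugate_le_conjugate hdb
  have hsbs_lt : ∀ t ∈ spectrum ℝ (s * b * s), t < c := by
    intro t ht
    rcases eq_or_ne t 0 with rfl | ht0
    · exact hc
    have hmem : (t : ℂ) ∈ spectrum ℂ (a * b) \ {0} := by
      rw [spectrum_mul_diff_zero_eq_sqrt_conj ha]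
      exact ⟨(spectrum.algebraMap_mem_iff ℂ).mpr ht, by simpa using ht0⟩
    simpa using (hab _ hmem.1).2
  intro z hz
  rcases eq_or_ne z 0 with rfl | hz0
  · simpa using hc
  have hmem : z ∈ spectrum ℂ (s * d * s) := by
    have hz' : z ∈ spectrum ℂ (a * d) \ {0} := ⟨hz, hz0⟩
    rw [spectrum_mul_diff_zero_eq_sqrt_conj ha] at hz'
    exact hz'.1
  obtain ⟨t, rfl⟩ : ∃ t : ℝ, z = t := ⟨z.re, (hsbs.of_le hsds).mem_spectrum_eq_re hmem⟩
  refine ⟨Complex.ofReal_im t, ?_⟩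
  simpa using spectrum_lt_of_le_of_spectrum_lt hsbs hsds hsbs_lt _
    ((spectrum.algebraMap_mem_iff ℂ).mp hmem)

end CStarAlgebra

open scoped MatrixOrder in
lemma Matrix.PosSemidef.map_ofReal {n : Type*} [Fintype n] {A : Matrix n n ℝ}
    (hA : A.PosSemidef) : (A.map ((↑) : ℝ → ℂ)).PosSemidef := by
  classical
  obtain ⟨X, rfl⟩ := CStarAlgebra.nonneg_iff_eq_star_mul_self.mp hA.nonneg
  have hmap : (star X * X).map ((↑) : ℝ → ℂ) = star (X.map (↑)) * X.map (↑) := by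
    ext i j
    simp [Matrix.mul_apply]
  rw [hmap]
  exact Matrix.nonneg_iff_posSemidef.mp (star_mul_self_nonneg _)

namespace NIControl

theorem max_eig_monotone_psd_product_general {n : ℕ} (A B D : Matrix (Fin n) (Fin n) ℝ)
    (hA : A.PosSemidef) (hB : B.IsHermitian)
    (hDB : (B - D).PosSemidef)
    (hAB : maxEigLT (A * B) 1) :
    maxEigLT (A * D) 1 := by
  have hmap : ∀ M N : Matrix (Fin n) (Fin n) ℝ,
      (M * N).map ((↑) : ℝ → ℂ) = M.map (↑) * N.map (↑) :=
    fun _ _ => Matrix.map_mul (f := Complex.ofRealHom)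
  unfold maxEigLT eigsRealAndLT at hAB ⊢
  rw [hmap] at hAB ⊢
  open scoped Matrix.Norms.L2Operator MatrixOrder in
  refine spectrum_mul_lt_of_le (Matrix.nonneg_iff_posSemidef.mpr hA.map_ofReal) ?_ ?_ one_pos hAB
  · exact hB.map _ fun _ => (Complex.conj_ofReal _).symm
  · rw [Matrix.le_iff, ← Matrix.map_sub _ Complex.ofReal_sub]
    exact hDB.map_ofReal

/-- monotonicity of the largest eigenvalue of `A⬝(·)` for
`A = Aᵀ ≥ 0` and symmetric `D ≤ B`. -/
theorem max_eig_monotone_psd_product {n : ℕ} (A B D : Matrix (Fin n) (Fin n) ℝ)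
    (hA : A.PosSemidef) (hB : B.IsHermitian) (hD : D.IsHermitian)
    (hDB : (B - D).PosSemidef)
    (hAB : maxEigLT (A * B) 1) :
    maxEigLT (A * D) 1 :=
  max_eig_monotone_psd_product_general A B D hA hB hDB hAB

end NIControl
end
end
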